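/- Let d2, a2, h, q > 0 and x2 > 0. If w is a solution of the downstream toxicant boundary value problem on [0, x2], then w(x) > 0 for all x ∈ [0, x2]. -/

import Mathlib

open Set

/-- `w` is a solution of the downstream toxicant boundary value problem with
parameters `d2, a2, h, q` on the interval `[0, x2]`. -/
def IsDownstreamSolution (d2 a2 h q x2 : ℝ) (w : ℝ → ℝ) : Prop :=
  ContDiff ℝ 2 w ∧
  (∀ x ∈ Set.Icc (0 : ℝ) x2,
      d2 * deriv (deriv w) x - a2 * deriv w x + h - q * w x = 0) ∧
  d2 * deriv w 0 - a2 * w 0 = 0 ∧ d2 * deriv w x2 - a2 * w x2 = 0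

/-- any solution of the downstream toxicant boundary value
problem is positive on `[0, x2]`. -/
theorem downstream_positive
    (d2 a2 h q x2 : ℝ) (w : ℝ → ℝ)
    (hd2 : 0 < d2) (ha2 : 0 < a2) (hh : 0 < h) (hq : 0 < q) (hx2 : 0 < x2)
    (hw : IsDownstreamSolution d2 a2 h q x2 w) :
    ∀ x ∈ Set.Icc (0 : ℝ) x2, 0 < w x := by
  obtain ⟨hC2, hode, hbc0, hbc2⟩ := hw
  have hd2' : d2 ≠ 0 := ne_of_gt hd2
  have hdw : Differentiable ℝ w := hC2.differentiable (by norm_num)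
  have hcw : Continuous w := hdw.continuous
  have hC1 : ContDiff ℝ 1 (deriv w) := by
    have h2 : ContDiff ℝ ((1 : ℕ) + 1) w := by exact_mod_cast hC2
    exact (contDiff_succ_iff_deriv.mp h2).2.2
  have hdw2 : Differentiable ℝ (deriv w) := hC1.differentiable (by norm_num)
  have hcont2 : Continuous (deriv (deriv w)) := hC1.continuous_deriv le_rfl
  set lam := a2 / d2 with hlamdef
  have hlam : d2 * lam = a2 := by rw [hlamdef]; field_simp
  set z : ℝ → ℝ := fun x => Real.exp (-(lam * x)) * w x with hzdef
  have hzd : ∀ x : ℝ, HasDerivAt z (Real.exp (-(lam * x)) * (deriv w x - lam * w x)) x := by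
    intro x
    have h1 : HasDerivAt (fun y : ℝ => -(lam * y)) (-lam) x := by
      simpa [Pi.neg_def] using ((hasDerivAt_id x).const_mul lam).neg
    have h2 : HasDerivAt (fun y : ℝ => Real.exp (-(lam * y)))
        (Real.exp (-(lam * x)) * (-lam)) x := (Real.hasDerivAt_exp _).comp x h1
    have h3 : HasDerivAt (fun y => Real.exp (-(lam * y)) * w y)
        (Real.exp (-(lam * x)) * -lam * w x + Real.exp (-(lam * x)) * deriv w x) x :=
      h2.mul (hdw x).hasDerivAt
    convert h3 using 1
    ring
  have hzc : Continuous z := by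
    exact (Real.continuous_exp.comp (continuous_const.mul continuous_id).neg).mul hcw
  set g : ℝ → ℝ := fun x => d2 * deriv w x - a2 * w x with hgdef
  have hgd : ∀ x : ℝ, HasDerivAt g (d2 * deriv (deriv w) x - a2 * deriv w x) x := fun x =>
    ((hdw2 x).hasDerivAt.const_mul d2).sub ((hdw x).hasDerivAt.const_mul a2)
  have hgderiv : ∀ x : ℝ, deriv g x = d2 * deriv (deriv w) x - a2 * deriv w x :=
    fun x => (hgd x).deriv
  have hgc : Continuous g :=
    (continuous_const.mul hC1.continuous).sub (continuous_const.mul hcw)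
  have hcontdg : Continuous (deriv g) := by
    rw [show deriv g = fun x => d2 * deriv (deriv w) x - a2 * deriv w x from funext hgderiv]
    exact (continuous_const.mul hcont2).sub (continuous_const.mul hC1.continuous)
  obtain ⟨x0, hx0, hmin⟩ := (isCompact_Icc : IsCompact (Icc (0:ℝ) x2)).exists_isMinOn
    (nonempty_Icc.mpr hx2.le) hzc.continuousOn
  have hmin' : ∀ x ∈ Icc (0:ℝ) x2, z x0 ≤ z x := fun x hx => hmin hx
  -- derivative of z in terms of g
  have hzg : ∀ x : ℝ, d2 * (deriv w x - lam * w x) = g x := by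
    intro x; simp only [hgdef]; rw [← hlam]; ring
  have hzpos : 0 < z x0 := by
    by_contra hle
    push_neg at hle
    have hwx0 : w x0 ≤ 0 := by
      have he := Real.exp_pos (-(lam * x0))
      by_contra hwp
      push_neg at hwp
      have : 0 < z x0 := mul_pos he hwp
      linarith
    -- g vanishes at the minimizer
    have hgx0 : g x0 = 0 := by
      rcases eq_or_lt_of_le hx0.1 with h0 | h0
      · simp only [hgdef, ← h0]; exact hbc0
      rcases eq_or_lt_of_le hx0.2 with h2 | h2
      · simp only [hgdef, h2]; exact hbc2
      · have hloc : IsLocalMin z x0 := hmin.isLocalMin (Icc_mem_nhds h0 h2)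
        have hdz0 : deriv z x0 = 0 := hloc.deriv_eq_zero
        rw [(hzd x0).deriv] at hdz0
        have hexp : Real.exp (-(lam * x0)) ≠ 0 := Real.exp_ne_zero _
        have h4 : deriv w x0 - lam * w x0 = 0 := by
          rcases mul_eq_zero.mp hdz0 with h | h
          · exact absurd h hexp
          · exact h
        have := hzg x0
        rw [h4] at this
        simp only [mul_zero] at this
        exact this.symm
    have hdgx0 : deriv g x0 < 0 := by
      rw [hgderiv]
      have := hode x0 hx0
      nlinarith
    have hopen : IsOpen ((deriv g) ⁻¹' Iio 0) := isOpen_Iio.preimage hcontdg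
    obtain ⟨ε, hε, hball⟩ := Metric.isOpen_iff.mp hopen x0 hdgx0
    rcases eq_or_lt_of_le hx0.2 with hx0top | hx0top
    · -- x0 = x2 : work on [b, x2]
      obtain ⟨δ, hδpos, hδ1, hδ2⟩ : ∃ δ : ℝ, 0 < δ ∧ δ ≤ ε/2 ∧ δ ≤ x2 :=
        ⟨min (ε/2) x2, lt_min (by linarith) hx2, min_le_left _ _, min_le_right _ _⟩
      set b : ℝ := x2 - δ with hbdef
      have hb0 : 0 ≤ b := by simp only [hbdef]; linarith
      have hbx2 : b < x2 := by simp only [hbdef]; linarith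
      have hclose : ∀ x ∈ Ioo b x2, deriv g x < 0 := by
        intro x hx
        have hx1 : b < x := hx.1
        have hx2' : x < x2 := hx.2
        apply hball
        rw [Metric.mem_ball, Real.dist_eq, hx0top, abs_sub_lt_iff]
        constructor
        · linarith
        · simp only [hbdef] at hx1; linarith
      have hganti : StrictAntiOn g (Icc b x2) := by
        apply strictAntiOn_of_deriv_neg (convex_Icc b x2) hgc.continuousOn
        intro x hx
        rw [interior_Icc] at hx
        exact hclose x hx
      have hgx2 : g x2 = 0 := by rw [← hx0top]; exact hgx0
      have hgpos : ∀ x ∈ Ioo b x2, 0 < g x := by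
        intro x hx
        have := hganti ⟨hx.1.le, hx.2.le⟩ (right_mem_Icc.mpr hbx2.le) hx.2
        linarith [hgx2]
      have hzmono : StrictMonoOn z (Icc b x2) := by
        apply strictMonoOn_of_deriv_pos (convex_Icc b x2) hzc.continuousOn
        intro x hx
        rw [interior_Icc] at hx
        rw [(hzd x).deriv]
        have hgp := hgpos x hx
        have he := Real.exp_pos (-(lam * x))
        have h5 : 0 < deriv w x - lam * w x := by nlinarith [hzg x]
        exact mul_pos he h5
      have hzlt : z b < z x0 := by
        rw [hx0top]
        exact hzmono (left_mem_Icc.mpr hbx2.le) (right_mem_Icc.mpr hbx2.le) hbx2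
      have := hmin' b ⟨hb0, hbx2.le⟩
      linarith
    · -- x0 < x2 : work on [x0, b]
      obtain ⟨δ, hδpos, hδ1, hδ2⟩ : ∃ δ : ℝ, 0 < δ ∧ δ ≤ ε/2 ∧ δ ≤ x2 - x0 :=
        ⟨min (ε/2) (x2 - x0), lt_min (by linarith) (by linarith),
          min_le_left _ _, min_le_right _ _⟩
      set b : ℝ := x0 + δ with hbdef
      have hbgt : x0 < b := by simp only [hbdef]; linarith
      have hbx2 : b ≤ x2 := by simp only [hbdef]; linarith
      have hclose : ∀ x ∈ Ioo x0 b, deriv g x < 0 := by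
        intro x hx
        have hx1 : x0 < x := hx.1
        have hx2' : x < b := hx.2
        simp only [hbdef] at hx2'
        apply hball
        rw [Metric.mem_ball, Real.dist_eq, abs_sub_lt_iff]
        constructor
        · linarith
        · linarith
      have hganti : StrictAntiOn g (Icc x0 b) := by
        apply strictAntiOn_of_deriv_neg (convex_Icc x0 b) hgc.continuousOn
        intro x hx
        rw [interior_Icc] at hx
        exact hclose x hx
      have hgneg : ∀ x ∈ Ioo x0 b, g x < 0 := by
        intro x hx
        have := hganti (left_mem_Icc.mpr hbgt.le) ⟨hx.1.le, hx.2.le⟩ hx.1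
        linarith [hgx0 ▸ this]
      have hzanti : StrictAntiOn z (Icc x0 b) := by
        apply strictAntiOn_of_deriv_neg (convex_Icc x0 b) hzc.continuousOn
        intro x hx
        rw [interior_Icc] at hx
        rw [(hzd x).deriv]
        have hgn := hgneg x hx
        have he := Real.exp_pos (-(lam * x))
        have h5 : deriv w x - lam * w x < 0 := by nlinarith [hzg x]
        exact mul_neg_of_pos_of_neg he h5
      have hzlt : z b < z x0 :=
        hzanti (left_mem_Icc.mpr hbgt.le) (right_mem_Icc.mpr hbgt.le) hbgt
      have hbmem : b ∈ Icc (0:ℝ) x2 := ⟨le_trans hx0.1 hbgt.le, hbx2⟩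
      have := hmin' b hbmem
      linarith
  intro x hx
  have hzx : 0 < z x := lt_of_lt_of_le hzpos (hmin' x hx)
  have he := Real.exp_pos (-(lam * x))
  by_contra hwx
  push_neg at hwx
  have : z x ≤ 0 := mul_nonpos_of_nonneg_of_nonpos he.le hwx
  linarith
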